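/- Let h(x) = (x²−1)²/4 and let f be the clipped loss with parameters 1 < a < b. There exists a constant A ≥ 1 such that for all a ≥ A and b ≥ 2a, for every x ∈ ℝ: |f′(x) − h′(x)| ≤ 7|x|³·1{|x| ≥ a} and |f″(x) − h″(x)| ≤ 9x²·1{|x| ≥ a}. In particular f′ = h′ and f″ = h″ on [−a, a]. -/

import Mathlib

/-- The quartic loss `h(x) = (x² - 1)² / 4`. -/
noncomputable def hq (x : ℝ) : ℝ := (x ^ 2 - 1) ^ 2 / 4

/-- The clipped loss `f` with parameters `a < b`: it agrees with `hq` on `[-a, a]`,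
is a cubic spline on `a < |x| ≤ b` (built from `h'(a) = a³ - a` and `h''(a) = 3a² - 1`),
and is linear for `|x| > b`. -/
noncomputable def fclip (a b x : ℝ) : ℝ :=
  if |x| ≤ a then hq x
  else if |x| ≤ b then
    hq a + (a ^ 3 - a) * (|x| - a) + ((3 * a ^ 2 - 1) / 2) * (|x| - a) ^ 2
      - ((3 * a ^ 2 - 1) / (6 * (b - a))) * (|x| - a) ^ 3
  else
    (hq a + (a ^ 3 - a) * (b - a) + ((3 * a ^ 2 - 1) / 2) * (b - a) ^ 2
      - ((3 * a ^ 2 - 1) / (6 * (b - a))) * (b - a) ^ 3)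
      + ((a ^ 3 - a) + ((b - a) / 2) * (3 * a ^ 2 - 1)) * (|x| - b)

/-!
Write `f x = P |x|`, where the profile `P = clipProfile a b` is `h` on `(-∞, a]`, a cubic spline
on `[a, b]` and the line tangent to the spline at `b` on `[b, ∞)`. The spline is the second-order
Taylor polynomial of `h` at `a` plus a cubic term whose coefficient makes its second derivative
vanish at `b`, so the pieces agree to second order at both junctions and `P` is twice
differentiable with piecewise explicit `P'` and `P''`. As `P = h` near `0`, `f = P` on `[-a, ∞)`,
and evenness of `f` and `h` reduces every claim to `x = |x|`. For `t ≥ a ≥ 1` both `P' t` and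
`h' t` lie in `[0, 4t³]`, and both `P'' t` and `h'' t` lie in `[0, 3t²]`.
-/

open Set Filter Topology

theorem hasDerivAt_ite_le {F : Type*} [NormedAddCommGroup F] [NormedSpace ℝ F]
    {f g f' g' : ℝ → F} {c : ℝ} (hf : ∀ x, HasDerivAt f (f' x) x)
    (hg : ∀ x, HasDerivAt g (g' x) x) (hfg : f c = g c) (hfg' : f' c = g' c) (x : ℝ) :
    HasDerivAt (fun y => if y ≤ c then f y else g y) (if x ≤ c then f' x else g' x) x := by
  rcases lt_trichotomy x c with hxc | rfl | hcx
  · rw [if_pos hxc.le]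
    refine (hf x).congr_of_eventuallyEq ?_
    filter_upwards [Iio_mem_nhds hxc] with y hy using if_pos (le_of_lt hy)
  · rw [if_pos le_rfl, ← hasDerivWithinAt_univ, ← Iic_union_Ici]
    refine HasDerivWithinAt.union
      ((hf x).hasDerivWithinAt.congr_of_mem (fun y hy => if_pos hy) (mem_Iic.2 le_rfl)) ?_
    rw [hfg']
    refine (hg x).hasDerivWithinAt.congr_of_mem (fun y hy => ?_) (mem_Ici.2 le_rfl)
    rcases (mem_Ici.mp hy).eq_or_lt with rfl | hxy
    · rw [if_pos le_rfl, hfg]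
    · exact if_neg (not_le.mpr hxy)
  · rw [if_neg (not_le.mpr hcx)]
    refine (hg x).congr_of_eventuallyEq ?_
    filter_upwards [Ioi_mem_nhds hcx] with y hy using if_neg (not_le.mpr hy)

section EvenOdd

variable {𝕜 F : Type*} [NontriviallyNormedField 𝕜] [NormedAddCommGroup F] [NormedSpace 𝕜 F]

theorem Function.Even.deriv {f : 𝕜 → F} (hf : f.Even) : (deriv f).Odd := fun x => by
  have h := deriv_comp_neg f (-x)
  rwa [show (fun y => f (-y)) = f from funext hf, neg_neg] at h

theorem Function.Odd.deriv {f : 𝕜 → F} (hf : f.Odd) : (deriv f).Even := fun x => by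
  have h := deriv_comp_neg f (-x)
  rwa [show (fun y => f (-y)) = -f from funext hf, deriv.neg, neg_neg, neg_inj] at h

end EvenOdd

theorem Function.Odd.sub {α β : Type*} [Neg α] [SubtractionCommMonoid β] {f g : α → β}
    (hf : f.Odd) (hg : g.Odd) : (f - g).Odd := fun x => by
  simp only [Pi.sub_apply, hf.eq, hg.eq, neg_sub_neg, neg_sub]

theorem Function.Even.sub {α β : Type*} [Neg α] [Sub β] {f g : α → β}
    (hf : f.Even) (hg : g.Even) : (f - g).Even := fun x => by
  simp only [Pi.sub_apply, hf.eq, hg.eq]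

theorem Function.Even.apply_abs {α β : Type*} [AddGroup α] [LinearOrder α] {f : α → β}
    (hf : f.Even) (x : α) : f |x| = f x := by
  rcases abs_choice x with h | h <;> rw [h]
  exact hf x

theorem Function.Odd.abs_apply_abs {α β : Type*} [AddGroup α] [LinearOrder α] [AddGroup β]
    [LinearOrder β] {f : α → β} (hf : f.Odd) (x : α) : |f (|x|)| = |f x| := by
  rcases abs_choice x with h | h <;> rw [h]
  rw [hf x, abs_neg]

theorem hq_even : hq.Even := fun x => by simp only [hq, neg_sq]

theorem hasDerivAt_hq (x : ℝ) : HasDerivAt hq (x ^ 3 - x) x := by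
  refine ((((hasDerivAt_pow 2 x).sub_const 1).fun_pow 2).div_const 4).congr_deriv ?_
  push_cast
  ring

theorem deriv_hq : deriv hq = fun x => x ^ 3 - x := funext fun x => (hasDerivAt_hq x).deriv

theorem hasDerivAt_cube_sub_self (x : ℝ) :
    HasDerivAt (fun x : ℝ => x ^ 3 - x) (3 * x ^ 2 - 1) x :=
  ((hasDerivAt_pow 3 x).fun_sub (hasDerivAt_id' x)).congr_deriv (by push_cast; ring)

theorem deriv_deriv_hq : deriv (deriv hq) = fun x => 3 * x ^ 2 - 1 := by
  rw [deriv_hq]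
  exact funext fun x => (hasDerivAt_cube_sub_self x).deriv

theorem hq_abs (x : ℝ) : hq |x| = hq x := hq_even.apply_abs x

noncomputable def clipCubicCoeff (a b : ℝ) : ℝ := (3 * a ^ 2 - 1) / (6 * (b - a))

noncomputable def clipSpline (a b t : ℝ) : ℝ :=
  hq a + (a ^ 3 - a) * (t - a) + ((3 * a ^ 2 - 1) / 2) * (t - a) ^ 2
    - clipCubicCoeff a b * (t - a) ^ 3

noncomputable def clipSplineDeriv (a b t : ℝ) : ℝ :=
  (a ^ 3 - a) + (3 * a ^ 2 - 1) * (t - a) - 3 * clipCubicCoeff a b * (t - a) ^ 2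

noncomputable def clipSplineDeriv2 (a b t : ℝ) : ℝ :=
  (3 * a ^ 2 - 1) - 6 * clipCubicCoeff a b * (t - a)

noncomputable def clipSlope (a b : ℝ) : ℝ := (a ^ 3 - a) + ((b - a) / 2) * (3 * a ^ 2 - 1)

noncomputable def clipProfile (a b t : ℝ) : ℝ :=
  if t ≤ a then hq t
  else if t ≤ b then clipSpline a b t else clipSpline a b b + clipSlope a b * (t - b)

noncomputable def clipProfileDeriv (a b t : ℝ) : ℝ :=
  if t ≤ a then t ^ 3 - t else if t ≤ b then clipSplineDeriv a b t else clipSlope a b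

noncomputable def clipProfileDeriv2 (a b t : ℝ) : ℝ :=
  if t ≤ a then 3 * t ^ 2 - 1 else if t ≤ b then clipSplineDeriv2 a b t else 0

theorem fclip_eq_clipProfile_abs (a b x : ℝ) : fclip a b x = clipProfile a b |x| := by
  simp only [fclip, clipProfile, clipSpline, clipCubicCoeff, clipSlope, hq_abs]

theorem fclip_even (a b : ℝ) : (fclip a b).Even := fun x => by
  simp only [fclip_eq_clipProfile_abs, abs_neg]

theorem fclip_eqOn_clipProfile {a : ℝ} (b : ℝ) :
    EqOn (fclip a b) (clipProfile a b) (Ici (-a)) := by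
  intro x hx
  rw [fclip_eq_clipProfile_abs]
  rcases le_or_gt 0 x with hx0 | hx0
  · rw [abs_of_nonneg hx0]
  · have hxa : |x| ≤ a := by rw [abs_of_neg hx0]; linarith [mem_Ici.mp hx]
    rw [clipProfile, clipProfile, if_pos hxa, if_pos (by linarith [neg_abs_le x]), hq_abs]

section Spline

variable (a b t : ℝ)

theorem hasDerivAt_clipSpline : HasDerivAt (clipSpline a b) (clipSplineDeriv a b t) t := by
  have hs : HasDerivAt (fun t : ℝ => t - a) 1 t := (hasDerivAt_id' t).sub_const a
  refine ((((hs.const_mul (a ^ 3 - a)).const_add (hq a)).fun_add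
    ((hs.fun_pow 2).const_mul _)).fun_sub ((hs.fun_pow 3).const_mul _)).congr_deriv ?_
  simp only [clipSplineDeriv]
  push_cast
  ring

theorem hasDerivAt_clipSplineDeriv :
    HasDerivAt (clipSplineDeriv a b) (clipSplineDeriv2 a b t) t := by
  have hs : HasDerivAt (fun t : ℝ => t - a) 1 t := (hasDerivAt_id' t).sub_const a
  refine (((hs.const_mul (3 * a ^ 2 - 1)).const_add (a ^ 3 - a)).fun_sub
    ((hs.fun_pow 2).const_mul _)).congr_deriv ?_
  simp only [clipSplineDeriv2]
  push_cast
  ring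

variable {a b}

theorem six_mul_clipCubicCoeff_mul (hab : a ≠ b) :
    6 * clipCubicCoeff a b * (b - a) = 3 * a ^ 2 - 1 := by
  have : b - a ≠ 0 := sub_ne_zero.mpr hab.symm
  rw [clipCubicCoeff]
  field_simp

theorem clipCubicCoeff_nonneg (ha : 1 ≤ a) (hab : a ≤ b) : 0 ≤ clipCubicCoeff a b :=
  div_nonneg (by nlinarith) (by linarith)

theorem clipSplineDeriv_right (hab : a ≠ b) : clipSplineDeriv a b b = clipSlope a b := by
  rw [clipSplineDeriv, clipSlope]
  linear_combination (-(b - a) / 2) * six_mul_clipCubicCoeff_mul hab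

theorem clipSplineDeriv2_right (hab : a ≠ b) : clipSplineDeriv2 a b b = 0 := by
  rw [clipSplineDeriv2]
  linear_combination -six_mul_clipCubicCoeff_mul hab

end Spline

section Profile

variable {a b : ℝ}

theorem hasDerivAt_clipProfile (hab : a < b) (t : ℝ) :
    HasDerivAt (clipProfile a b) (clipProfileDeriv a b t) t := by
  have hline (x : ℝ) : HasDerivAt (fun t => clipSpline a b b + clipSlope a b * (t - b))
      (clipSlope a b) x :=
    (((hasDerivAt_id' x).sub_const b).const_mul _).const_add _ |>.congr_deriv (mul_one _)
  refine hasDerivAt_ite_le hasDerivAt_hq (hasDerivAt_ite_le (hasDerivAt_clipSpline a b) hline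
    (by simp) (clipSplineDeriv_right hab.ne)) ?_ ?_ t
  · simp [if_pos hab.le, clipSpline]
  · simp [if_pos hab.le, clipSplineDeriv]

theorem hasDerivAt_clipProfileDeriv (hab : a < b) (t : ℝ) :
    HasDerivAt (clipProfileDeriv a b) (clipProfileDeriv2 a b t) t := by
  refine hasDerivAt_ite_le (c := a) hasDerivAt_cube_sub_self
    (hasDerivAt_ite_le (hasDerivAt_clipSplineDeriv a b) (fun x => hasDerivAt_const x _)
      (clipSplineDeriv_right hab.ne) (clipSplineDeriv2_right hab.ne)) ?_ ?_ t
  · simp [if_pos hab.le, clipSplineDeriv]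
  · simp [if_pos hab.le, clipSplineDeriv2]

theorem deriv_fclip_of_neg_lt (hab : a < b) {x : ℝ} (hx : -a < x) :
    deriv (fclip a b) x = clipProfileDeriv a b x := by
  rw [((fclip_eqOn_clipProfile b).eventuallyEq_of_mem (Ici_mem_nhds hx)).deriv_eq]
  exact (hasDerivAt_clipProfile hab x).deriv

theorem deriv_deriv_fclip_of_neg_lt (hab : a < b) {x : ℝ} (hx : -a < x) :
    deriv (deriv (fclip a b)) x = clipProfileDeriv2 a b x := by
  have hderiv : deriv (fclip a b) =ᶠ[𝓝 x] clipProfileDeriv a b := by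
    filter_upwards [Ioi_mem_nhds hx] with y hy using deriv_fclip_of_neg_lt hab hy
  rw [hderiv.deriv_eq]
  exact (hasDerivAt_clipProfileDeriv hab x).deriv

theorem abs_deriv_fclip_sub_deriv_hq (ha : 0 < a) (hab : a < b) (x : ℝ) :
    |deriv (fclip a b) x - deriv hq x| = |clipProfileDeriv a b |x| - (|x| ^ 3 - |x|)| := by
  have h := ((fclip_even a b).deriv.sub hq_even.deriv).abs_apply_abs x
  rw [Pi.sub_apply, Pi.sub_apply] at h
  rw [← h, deriv_fclip_of_neg_lt hab (by linarith [abs_nonneg x]), (hasDerivAt_hq _).deriv]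

theorem deriv_deriv_fclip_sub_deriv_deriv_hq (ha : 0 < a) (hab : a < b) (x : ℝ) :
    deriv (deriv (fclip a b)) x - deriv (deriv hq) x
      = clipProfileDeriv2 a b |x| - (3 * |x| ^ 2 - 1) := by
  have h := ((fclip_even a b).deriv.deriv.sub hq_even.deriv.deriv).apply_abs x
  rw [Pi.sub_apply, Pi.sub_apply] at h
  rw [← h, deriv_deriv_fclip_of_neg_lt hab (by linarith [abs_nonneg x]), deriv_deriv_hq]

end Profile

section Bounds

variable {a b t : ℝ}

theorem clipSplineDeriv_mem_Icc (ha : 1 ≤ a) (hab : a < b) (ht : a ≤ t) (htb : t ≤ b) :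
    clipSplineDeriv a b t ∈ Icc 0 (4 * t ^ 3) := by
  simp only [clipSplineDeriv, mem_Icc]
  have hκ := six_mul_clipCubicCoeff_mul hab.ne
  have hκ0 := clipCubicCoeff_nonneg ha hab.le
  have hquad : 3 * clipCubicCoeff a b * (t - a) ^ 2 ≤ (3 * a ^ 2 - 1) / 2 * (t - a) := by
    nlinarith [mul_le_mul_of_nonneg_left (sub_le_sub_right htb a) hκ0]
  constructor <;>
    nlinarith [mul_nonneg hκ0 (sq_nonneg (t - a)), pow_le_pow_left₀ (by linarith) ht 3]

theorem clipSplineDeriv2_mem_Icc (ha : 1 ≤ a) (hab : a < b) (ht : a ≤ t) (htb : t ≤ b) :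
    clipSplineDeriv2 a b t ∈ Icc 0 (3 * t ^ 2) := by
  simp only [clipSplineDeriv2, mem_Icc]
  have hκ := six_mul_clipCubicCoeff_mul hab.ne
  have hκ0 := clipCubicCoeff_nonneg ha hab.le
  constructor <;> nlinarith [mul_le_mul_of_nonneg_left (sub_le_sub_right htb a) hκ0,
    mul_le_mul_of_nonneg_left (sub_nonneg.2 ht) hκ0]

theorem clipSlope_mem_Icc (ha : 1 ≤ a) (hab : a < b) (ht : b ≤ t) :
    clipSlope a b ∈ Icc 0 (4 * t ^ 3) := by
  simp only [clipSlope, mem_Icc]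
  have hat : a ≤ t := hab.le.trans ht
  have hcoeff : 0 ≤ 3 * a ^ 2 - 1 := by nlinarith
  have hquad : (b - a) * (3 * a ^ 2 - 1) ≤ t * (3 * t ^ 2) :=
    mul_le_mul (by linarith) (by nlinarith) hcoeff (by linarith)
  constructor <;> nlinarith [mul_nonneg (sub_nonneg.2 hab.le) hcoeff,
    pow_le_pow_left₀ (by linarith) hat 3]

theorem abs_clipProfileDeriv_sub_le (ha : 1 ≤ a) (hab : a < b) (t : ℝ) :
    |clipProfileDeriv a b t - (t ^ 3 - t)| ≤ if a ≤ t then 7 * t ^ 3 else 0 := by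
  split_ifs with hat
  · have h1 : 1 ≤ t := ha.trans hat
    have hcube : t ^ 3 - t ∈ Icc 0 (4 * t ^ 3) := by
      constructor <;> nlinarith [mul_nonneg (mul_nonneg (sub_nonneg.2 h1) (sub_nonneg.2 h1))
        (by linarith : (0:ℝ) ≤ t)]
    have hmem : clipProfileDeriv a b t ∈ Icc 0 (4 * t ^ 3) := by
      unfold clipProfileDeriv
      split_ifs with hta htb
      · exact hcube
      · exact clipSplineDeriv_mem_Icc ha hab hat htb
      · exact clipSlope_mem_Icc ha hab (not_le.1 htb).le
    exact (abs_sub_le_of_nonneg_of_le hmem.1 hmem.2 hcube.1 hcube.2).trans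
      (by nlinarith [pow_pos (by linarith : (0:ℝ) < t) 3])
  · rw [clipProfileDeriv, if_pos (not_le.1 hat).le, sub_self, abs_zero]

theorem abs_clipProfileDeriv2_sub_le (ha : 1 ≤ a) (hab : a < b) (t : ℝ) :
    |clipProfileDeriv2 a b t - (3 * t ^ 2 - 1)| ≤ if a ≤ t then 9 * t ^ 2 else 0 := by
  split_ifs with hat
  · have h1 : 1 ≤ t := ha.trans hat
    have hsq : 3 * t ^ 2 - 1 ∈ Icc 0 (3 * t ^ 2) := by constructor <;> nlinarith
    have hmem : clipProfileDeriv2 a b t ∈ Icc 0 (3 * t ^ 2) := by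
      unfold clipProfileDeriv2
      split_ifs with hta htb
      · exact hsq
      · exact clipSplineDeriv2_mem_Icc ha hab hat htb
      · exact ⟨le_rfl, by positivity⟩
    exact (abs_sub_le_of_nonneg_of_le hmem.1 hmem.2 hsq.1 hsq.2).trans (by nlinarith)
  · rw [clipProfileDeriv2, if_pos (not_le.1 hat).le, sub_self, abs_zero]

end Bounds

theorem clipped_loss_derivative_comparison :
    ∃ A : ℝ, 1 ≤ A ∧ ∀ a b : ℝ, A ≤ a → 2 * a ≤ b →
      (∀ x : ℝ,
        |deriv (fclip a b) x - deriv hq x| ≤ (if a ≤ |x| then 7 * |x| ^ 3 else 0) ∧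
        |deriv (deriv (fclip a b)) x - deriv (deriv hq) x| ≤
          (if a ≤ |x| then 9 * x ^ 2 else 0)) ∧
      (∀ x ∈ Set.Icc (-a) a,
        deriv (fclip a b) x = deriv hq x ∧
        deriv (deriv (fclip a b)) x = deriv (deriv hq) x) := by
  refine ⟨1, le_rfl, fun a b ha hb => ?_⟩
  have ha0 : 0 < a := by linarith
  have hab : a < b := by linarith
  refine ⟨fun x => ⟨?_, ?_⟩, fun x hx => ⟨?_, ?_⟩⟩
  · rw [abs_deriv_fclip_sub_deriv_hq ha0 hab]
    exact abs_clipProfileDeriv_sub_le ha hab |x|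
  · rw [deriv_deriv_fclip_sub_deriv_deriv_hq ha0 hab, ← sq_abs x]
    exact abs_clipProfileDeriv2_sub_le ha hab |x|
  · have h := abs_deriv_fclip_sub_deriv_hq ha0 hab x
    rwa [clipProfileDeriv, if_pos (abs_le.2 hx), sub_self, abs_zero, abs_eq_zero,
      sub_eq_zero] at h
  · have h := deriv_deriv_fclip_sub_deriv_deriv_hq ha0 hab x
    rwa [clipProfileDeriv2, if_pos (abs_le.2 hx), sub_self, sub_eq_zero] at h
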